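/- arXiv:1207.2413 — 2 statements merged into one kernel-verified Lean document; each statement's English description precedes it below -/
import Mathlib

section
/- Let A, B ∈ ℝ[t, t⁻¹] be palindromic and coprime, with P̃, Q̃ palindromic satisfying P̃A + Q̃B = 1. Define γ_max(z) = P̃(z)/B(z) if B(z) > 0 and +∞ otherwise, and γ_min(z) = −Q̃(z)/A(z) if A(z) > 0 and −∞ otherwise, for z ∈ S¹. If for every z ∈ S¹ at least one of A(z), B(z) is positive, then γ_min(z) < γ_max(z) for all z ∈ S¹. -/
open LaurentPolynomial

noncomputable def lEval (p : LaurentPolynomial ℝ) (z : ℂ) : ℂ :=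
  Finsupp.sum (AddMonoidAlgebra.coeff p) fun n a => (a : ℂ) * z ^ n

def Palindromic (p : LaurentPolynomial ℝ) : Prop := invert p = p

/-- `γ_max(z) = P̃(z)/B(z)` if `B(z) > 0`, and `+∞` otherwise. -/
noncomputable def gammaMax (Pt B : LaurentPolynomial ℝ) (z : ℂ) : EReal :=
  if 0 < (lEval B z).re then ((((lEval Pt z).re / (lEval B z).re : ℝ) : EReal)) else ⊤

/-- `γ_min(z) = -Q̃(z)/A(z)` if `A(z) > 0`, and `-∞` otherwise. -/
noncomputable def gammaMin (Qt A : LaurentPolynomial ℝ) (z : ℂ) : EReal :=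
  if 0 < (lEval A z).re then (((-(lEval Qt z).re / (lEval A z).re : ℝ) : EReal)) else ⊥

/-! On the unit circle `conj z = z⁻¹`, so a real Laurent polynomial fixed by `t ↦ t⁻¹` takes
real values there. Evaluating `P̃A + Q̃B = 1` at `z` therefore gives `P̃(z)A(z) + Q̃(z)B(z) = 1`
in ℝ. Where `A(z), B(z) > 0` this says `P̃(z)/B(z) + Q̃(z)/A(z) = 1/(A(z)B(z)) > 0`; where one of
them is not positive, the corresponding side of the inequality is infinite. -/

open ComplexConjugate

/-- Evaluation is multiplicative only at `z ≠ 0`: with `0 ^ 0 = 1`, `lEval (T 1 * T (-1)) 0 = 1`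
while `lEval (T 1) 0 * lEval (T (-1)) 0 = 0`. -/
noncomputable def lEvalAlgHom {z : ℂ} (hz : z ≠ 0) : LaurentPolynomial ℝ →ₐ[ℝ] ℂ :=
  AddMonoidAlgebra.lift ℝ ℂ ℤ ((Units.coeHom ℂ).comp (zpowersHom ℂˣ (Units.mk0 z hz)))

lemma lEvalAlgHom_apply {z : ℂ} (hz : z ≠ 0) (p : LaurentPolynomial ℝ) :
    lEvalAlgHom hz p = lEval p z := by
  rw [lEvalAlgHom, AddMonoidAlgebra.lift_apply]
  refine Finsupp.sum_congr fun n _ => ?_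
  simp [Algebra.smul_def]

lemma lEval_invert (p : LaurentPolynomial ℝ) (z : ℂ) : lEval (invert p) z = lEval p z⁻¹ := by
  have : (invert p).coeff = Finsupp.equivMapDomain (Equiv.neg ℤ) p.coeff := by
    ext n
    simp [Finsupp.equivMapDomain_apply]
  rw [lEval, this, Finsupp.sum_equivMapDomain]
  simp [lEval, zpow_neg]

lemma conj_lEval (p : LaurentPolynomial ℝ) (z : ℂ) : conj (lEval p z) = lEval p (conj z) := by
  simp [lEval, map_finsuppSum]

lemma Palindromic.lEval_im_eq_zero {p : LaurentPolynomial ℝ} (hp : Palindromic p) {z : ℂ}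
    (hz : ‖z‖ = 1) : (lEval p z).im = 0 := by
  rw [← Complex.conj_eq_iff_im, conj_lEval, ← Complex.inv_eq_conj hz, ← lEval_invert, hp]

lemma lEval_re_mul_add_mul_eq_one {A B Pt Qt : LaurentPolynomial ℝ}
    (hA : Palindromic A) (hB : Palindromic B) (hbez : Pt * A + Qt * B = 1) {z : ℂ}
    (hz : ‖z‖ = 1) :
    (lEval Pt z).re * (lEval A z).re + (lEval Qt z).re * (lEval B z).re = 1 := by
  have hz0 : z ≠ 0 := by
    rintro rfl
    simp at hz
  have h := congrArg (fun p => (lEvalAlgHom hz0 p).re) hbez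
  simpa only [map_add, map_mul, map_one, lEvalAlgHom_apply, Complex.add_re, Complex.mul_re,
    Complex.one_re, hA.lEval_im_eq_zero hz, hB.lEval_im_eq_zero hz, mul_zero, sub_zero] using h

lemma neg_div_lt_div_of_mul_add_mul_eq_one {a b p q : ℝ} (ha : 0 < a) (hb : 0 < b)
    (h : p * a + q * b = 1) : -q / a < p / b := by
  rw [div_lt_div_iff₀ ha hb]
  linarith

lemma gammaMin_lt_gammaMax_of_re_mul_add_mul_eq_one {A B Pt Qt : LaurentPolynomial ℝ} {z : ℂ}
    (hpos : 0 < (lEval A z).re ∨ 0 < (lEval B z).re)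
    (hbez : (lEval Pt z).re * (lEval A z).re + (lEval Qt z).re * (lEval B z).re = 1) :
    gammaMin Qt A z < gammaMax Pt B z := by
  unfold gammaMin gammaMax
  split_ifs with hA hB hB
  · exact EReal.coe_lt_coe_iff.mpr (neg_div_lt_div_of_mul_add_mul_eq_one hA hB hbez)
  · exact EReal.coe_lt_top _
  · exact EReal.bot_lt_coe _
  · exact (hpos.elim hA hB).elim

theorem gammaMin_lt_gammaMax_general
    (A B Pt Qt : LaurentPolynomial ℝ)
    (hA : Palindromic A) (hB : Palindromic B)
    (hbez : Pt * A + Qt * B = 1)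
    (hpos : ∀ z : ℂ, ‖z‖ = 1 → 0 < (lEval A z).re ∨ 0 < (lEval B z).re) :
    ∀ z : ℂ, ‖z‖ = 1 → gammaMin Qt A z < gammaMax Pt B z := fun z hz =>
  gammaMin_lt_gammaMax_of_re_mul_add_mul_eq_one (hpos z hz)
    (lEval_re_mul_add_mul_eq_one hA hB hbez hz)

/-- If `P̃A + Q̃B = 1` with everything palindromic, `A`, `B` coprime, and at each
point of the unit circle at least one of `A(z)`, `B(z)` is positive, then
`γ_min(z) < γ_max(z)` everywhere on the unit circle. -/
theorem gammaMin_lt_gammaMax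
    (A B Pt Qt : LaurentPolynomial ℝ)
    (hA : Palindromic A) (hB : Palindromic B)
    (hPt : Palindromic Pt) (hQt : Palindromic Qt)
    (hcop : IsCoprime A B)
    (hbez : Pt * A + Qt * B = 1)
    (hpos : ∀ z : ℂ, ‖z‖ = 1 → 0 < (lEval A z).re ∨ 0 < (lEval B z).re) :
    ∀ z : ℂ, ‖z‖ = 1 → gammaMin Qt A z < gammaMax Pt B z :=
  gammaMin_lt_gammaMax_general A B Pt Qt hA hB hbez hpos
end

section
/- Every nonzero palindromic Laurent polynomial in ℝ[t,t⁻¹] whose value at t=1 and t=−1 is nonzero factors as a product of a nonzero real constant, a power ±tⁿ, and elementary palindromic polynomials B_ξ(t)^{n_ξ} for ξ ranging over {ξ ∈ ℂ∖{0} : Im ξ ≥ 0, |ξ| ≤ 1, ξ ≠ ±1}, and this factorization is unique up to ordering. -/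
open LaurentPolynomial

noncomputable def lmap (p : LaurentPolynomial ℝ) : LaurentPolynomial ℂ :=
  AddMonoidAlgebra.ofCoeff (Finsupp.mapRange (algebraMap ℝ ℂ) (map_zero _) (AddMonoidAlgebra.coeff p))

/-- The elementary palindromic polynomial `B_ξ`. -/
noncomputable def Bxi (ξ : ℂ) : LaurentPolynomial ℂ :=
  if ‖ξ‖ = 1 then
    (T 1 - C ξ) * (T 1 - C (starRingEnd ℂ ξ))
  else if ξ.im = 0 then
    (T 1 - C ξ) * (1 - C ξ⁻¹ * T (-1))
  else
    (T 1 - C ξ) * (T 1 - C (starRingEnd ℂ ξ)) *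
      (1 - T (-1) * C (starRingEnd ℂ ξ)⁻¹) * (1 - T (-1) * C ξ⁻¹)

/-! Write `p = P * T m` with `P` a real polynomial and `P(0) ≠ 0`. Palindromicity makes `P`
self-reciprocal, so the complex roots of `P` form a multiset stable under `z ↦ z̄` and
`z ↦ z⁻¹`; it avoids `0`, and also `±1` because `p(±1) ≠ 0`. Such a multiset is a disjoint
union of orbits of these two involutions, each orbit meets the domain
`{ξ ≠ 0, ±1 : ‖ξ‖ ≤ 1, Im ξ ≥ 0}` exactly once, and the roots of `B_ξ` are exactly the orbit of
`ξ`. So the factorization is the splitting of `P` into linear factors regrouped by orbits: the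
constant is the leading coefficient of `P`, the exponents are the multiplicities of the roots
lying in the domain, and the power of `T` is forced by comparing lowest-order terms. -/

namespace LaurentPolynomial

theorem exists_eq_toLaurent_mul_T {R : Type*} [CommRing R] {p : R[T;T⁻¹]} (hp : p ≠ 0) :
    ∃ (P : Polynomial R) (m : ℤ), P.coeff 0 ≠ 0 ∧ p = Polynomial.toLaurent P * T m := by
  obtain ⟨n, f, hf⟩ := p.exists_T_pow
  have hf0 : f ≠ 0 := by
    rintro rfl
    exact hp ((isUnit_T (n : ℤ)).mul_left_eq_zero.mp (by simpa using hf.symm))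
  obtain ⟨P, hfP, hXP⟩ := f.exists_eq_pow_rootMultiplicity_mul_and_not_dvd hf0 0
  rw [map_zero, sub_zero] at hfP hXP
  refine ⟨P, f.rootMultiplicity 0 - n, by rwa [Polynomial.X_dvd_iff] at hXP, ?_⟩
  have hp : p = Polynomial.toLaurent f * T (-n) := by
    rw [hf, mul_T_assoc, add_neg_cancel, T_zero, mul_one]
  conv_lhs => rw [hp, hfP]
  rw [map_mul, Polynomial.toLaurent_X_pow, sub_eq_add_neg, T_add]
  ring

theorem toLaurent_mul_T_eq_iff {R : Type*} [CommSemiring R] {f g : Polynomial R} {a b : ℤ}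
    (hf : f.coeff 0 ≠ 0) (hg : g.coeff 0 ≠ 0) :
    Polynomial.toLaurent f * T a = Polynomial.toLaurent g * T b ↔ f = g ∧ a = b := by
  refine ⟨fun h => ?_, by rintro ⟨rfl, rfl⟩; rfl⟩
  wlog hab : a ≤ b generalizing f g a b
  · obtain ⟨rfl, rfl⟩ := this hg hf h.symm (by omega)
    exact ⟨rfl, rfl⟩
  obtain ⟨k, rfl⟩ : ∃ k : ℕ, b = a + k := ⟨(b - a).toNat, by omega⟩
  rw [add_comm, T_add, ← mul_assoc, (isUnit_T a).mul_left_inj, ← Polynomial.toLaurent_X_pow,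
    ← map_mul, Polynomial.toLaurent_inj] at h
  obtain rfl | hk := eq_or_ne k 0
  · simpa using h
  · exact absurd (by rw [h, Polynomial.coeff_mul_X_pow', if_neg (by omega)]) hf

theorem reverse_eq_self_of_invert_eq {R : Type*} [CommSemiring R] {P : Polynomial R} {m : ℤ}
    (hP : P.coeff 0 ≠ 0)
    (h : invert (Polynomial.toLaurent P * T m) = Polynomial.toLaurent P * T m) :
    P.reverse = P := by
  have hrev : P.reverse.coeff 0 ≠ 0 := by
    rw [Polynomial.coeff_zero_reverse, Ne, Polynomial.leadingCoeff_eq_zero]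
    exact fun h => hP (by simp [h])
  refine ((toLaurent_mul_T_eq_iff (a := -m - P.natDegree) (b := m) hrev hP).mp ?_).1
  rw [← h, map_mul, invert_T, toLaurent_reverse, mul_assoc, ← T_add]
  ring_nf

theorem smeval_eq_eval₂ {R S : Type*} [CommSemiring R] [CommSemiring S] [Algebra R S]
    (p : R[T;T⁻¹]) (x : Sˣ) : p.smeval x = eval₂ (algebraMap R S) x p := by
  induction p using LaurentPolynomial.induction_on' with
  | add p q hp hq => rw [smeval_add, map_add, hp, hq]
  | C_mul_T n a => rw [smeval_C_mul_T_n, eval₂_C_mul_T, Algebra.smul_def]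

end LaurentPolynomial

namespace Polynomial

variable {K : Type*} [Field K]

theorem eq_C_mul_prod_X_sub_C_iff [IsAlgClosed K] {Q : K[X]} (hQ : Q ≠ 0) {r : K}
    {s : Multiset K} :
    Q = C r * (s.map (X - C ·)).prod ↔ r = Q.leadingCoeff ∧ s = Q.roots := by
  constructor
  · rintro rfl
    have hr : r ≠ 0 := by rintro rfl; simp at hQ
    have hmonic : (s.map (X - C ·)).prod.Monic :=
      monic_multiset_prod_of_monic _ _ fun z _ => monic_X_sub_C z
    rw [leadingCoeff_mul, leadingCoeff_C, hmonic.leadingCoeff, mul_one, roots_C_mul _ hr,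
      roots_multiset_prod_X_sub_C]
    exact ⟨rfl, rfl⟩
  · rintro ⟨rfl, rfl⟩
    exact (C_leadingCoeff_mul_prod_multiset_X_sub_C
      (IsAlgClosed.splits Q).natDegree_eq_card_roots.symm).symm

theorem reverse_X_sub_C {z : K} (hz : z ≠ 0) : (X - C z).reverse = C (-z) * (X - C z⁻¹) := by
  have hX : (X : K[X]).reverse = 1 := by
    have h := reverse_X_mul (C (1 : K))
    rwa [reverse_C, C_1, mul_one] at h
  have h := reverse_add_C (X : K[X]) (-z)
  rw [natDegree_X, pow_one, hX] at h
  rw [sub_eq_add_neg, ← C_neg, h, mul_sub, ← C_mul, neg_mul, mul_inv_cancel₀ hz]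
  simp only [C_neg, C_1]
  ring

theorem reverse_prod_X_sub_C {s : Multiset K} (hs : ∀ z ∈ s, z ≠ 0) :
    (s.map (X - C ·)).prod.reverse =
      C (s.map (-·)).prod * ((s.map (·⁻¹)).map (X - C ·)).prod := by
  induction s using Multiset.induction_on with
  | empty => simpa using reverse_C (1 : K)
  | cons a s ih =>
    simp only [Multiset.mem_cons, forall_eq_or_imp] at hs
    simp only [Multiset.map_cons, Multiset.prod_cons, reverse_mul_of_domain, ih hs.2,
      reverse_X_sub_C hs.1, C_mul]
    ring

theorem roots_reverse [IsAlgClosed K] {p : K[X]} (hp : p.coeff 0 ≠ 0) :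
    p.reverse.roots = p.roots.map (·⁻¹) := by
  have hp0 : p ≠ 0 := fun h => hp (by simp [h])
  have hs0 : ∀ z ∈ p.roots, z ≠ 0 := by
    rintro z hz rfl
    exact hp (by rwa [mem_roots hp0, IsRoot, ← coeff_zero_eq_eval_zero] at hz)
  refine ((eq_C_mul_prod_X_sub_C_iff (by rwa [Ne, reverse_eq_zero])
    (r := p.leadingCoeff * (p.roots.map (-·)).prod)).mp ?_).2.symm
  conv_lhs => rw [(eq_C_mul_prod_X_sub_C_iff hp0).mpr ⟨rfl, rfl⟩]
  rw [reverse_mul_of_domain, reverse_C, reverse_prod_X_sub_C hs0, C_mul, mul_assoc]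

theorem reverse_map_of_injective {R S : Type*} [Semiring R] [Semiring S] {f : R →+* S}
    (hf : Function.Injective f) (p : R[X]) : (p.map f).reverse = p.reverse.map f := by
  rw [reverse, reverse, natDegree_map_eq_of_injective hf, reflect_map]

theorem roots_map_conj_of_real (P : ℝ[X]) :
    (P.map (algebraMap ℝ ℂ)).roots.map (starRingEnd ℂ) = (P.map (algebraMap ℝ ℂ)).roots := by
  rw [← (IsAlgClosed.splits _).roots_map_of_injective (starRingEnd ℂ).injective, map_map]
  congr 2
  ext a
  simp

end Polynomial

theorem Multiset.map_tsub_of_injective {α β : Type*} [DecidableEq α] [DecidableEq β]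
    {f : α → β} (hf : Function.Injective f) (s t : Multiset α) :
    (s - t).map f = s.map f - t.map f := by
  ext b
  by_cases hb : b ∈ Set.range f
  · obtain ⟨a, rfl⟩ := hb
    simp only [Multiset.count_sub, Multiset.count_map_eq_count' f _ hf]
  · have (u : Multiset α) : (u.map f).count b = 0 := Multiset.count_eq_zero.2 fun h => by
      obtain ⟨a, -, rfl⟩ := Multiset.mem_map.1 h
      exact hb ⟨a, rfl⟩
    simp only [Multiset.count_sub, this, tsub_zero]

open ComplexConjugate
open Polynomial (X toLaurent)

theorem lmap_toLaurent_mul_T (P : Polynomial ℝ) (m : ℤ) :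
    lmap (toLaurent P * T m) = toLaurent (P.map (algebraMap ℝ ℂ)) * T m := by
  have hT : AddMonoidAlgebra.mapRingHom ℤ (algebraMap ℝ ℂ) (T m) = T m := by
    rw [T, T, AddMonoidAlgebra.mapRingHom_single, map_one]
  have hP : AddMonoidAlgebra.mapRingHom ℤ (algebraMap ℝ ℂ) (toLaurent P) =
      toLaurent (P.map (algebraMap ℝ ℂ)) := by
    refine RingHom.congr_fun (Polynomial.ringHom_ext
      (f := (AddMonoidAlgebra.mapRingHom ℤ (algebraMap ℝ ℂ)).comp toLaurent)
      (g := toLaurent.comp (Polynomial.mapRingHom (algebraMap ℝ ℂ))) (fun a => ?_) ?_) P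
    · simp only [RingHom.comp_apply, Polynomial.toLaurent_C, Polynomial.coe_mapRingHom,
        Polynomial.map_C]
      rw [← single_eq_C, ← single_eq_C, AddMonoidAlgebra.mapRingHom_single]
    · simp only [RingHom.comp_apply, Polynomial.toLaurent_X, Polynomial.coe_mapRingHom,
        Polynomial.map_X]
      rw [T, T, AddMonoidAlgebra.mapRingHom_single, map_one]
  change AddMonoidAlgebra.mapRingHom ℤ (algebraMap ℝ ℂ) _ = _
  rw [map_mul, hP, hT]

theorem lEval_eq_eval₂ (p : LaurentPolynomial ℝ) {z : ℂ} (hz : z ≠ 0) :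
    lEval p z = eval₂ (algebraMap ℝ ℂ) (Units.mk0 z hz) p := by
  rw [← smeval_eq_eval₂, smeval_eq_sum, lEval]
  simp [Complex.real_smul]

theorem lEval_toLaurent_mul_T (P : Polynomial ℝ) (m : ℤ) {z : ℂ} (hz : z ≠ 0) :
    lEval (toLaurent P * T m) z = (P.map (algebraMap ℝ ℂ)).eval z * z ^ m := by
  rw [lEval_eq_eval₂ _ hz, map_mul, eval₂_toLaurent, eval₂_T, Polynomial.eval_map,
    Units.val_zpow_eq_zpow_val, Units.val_mk0]

def fundamentalDomain : Set ℂ := {ξ | ‖ξ‖ ≤ 1 ∧ ξ ≠ 0 ∧ 0 ≤ ξ.im ∧ ξ ≠ 1 ∧ ξ ≠ -1}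

namespace fundamentalDomain

variable {ξ : ℂ}

theorem im_pos_of_norm_eq_one (hξ : ξ ∈ fundamentalDomain) (h : ‖ξ‖ = 1) : 0 < ξ.im := by
  obtain ⟨-, -, him, h1, hm1⟩ := hξ
  refine him.lt_of_ne fun h0 => ?_
  have hre : ξ = (ξ.re : ℂ) := Complex.ext rfl (by simp [h0])
  rw [hre, Complex.norm_real, Real.norm_eq_abs, abs_eq zero_le_one] at h
  rcases h with h | h
  · exact h1 (by rw [hre, h]; simp)
  · exact hm1 (by rw [hre, h]; simp)

theorem one_lt_norm_inv (hξ : ξ ∈ fundamentalDomain) (h : ‖ξ‖ ≠ 1) : 1 < ‖ξ⁻¹‖ := by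
  rw [norm_inv]
  exact one_lt_inv₀ (norm_pos_iff.2 hξ.2.1) |>.2 (hξ.1.lt_of_ne h)

theorem im_inv_neg (hξ : ξ ∈ fundamentalDomain) (h : ξ.im ≠ 0) : (ξ⁻¹).im < 0 := by
  have := Complex.normSq_pos.2 hξ.2.1
  have := hξ.2.2.1.lt_of_ne' h
  rw [Complex.inv_im, neg_div]
  exact neg_neg_of_pos (by positivity)

end fundamentalDomain

/-- The roots of `Bxi ξ`: the orbit of `ξ` under conjugation and inversion, listed without
repetition when `ξ ∈ fundamentalDomain`. -/
noncomputable def rootOrbit (ξ : ℂ) : Multiset ℂ :=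
  if ‖ξ‖ = 1 then {ξ, conj ξ}
  else if ξ.im = 0 then {ξ, ξ⁻¹}
  else {ξ, conj ξ, (conj ξ)⁻¹, ξ⁻¹}

theorem mem_rootOrbit_self (ξ : ℂ) : ξ ∈ rootOrbit ξ := by
  unfold rootOrbit
  split_ifs <;> simp

theorem mem_rootOrbit {ξ z : ℂ} (hz : z ∈ rootOrbit ξ) :
    z = ξ ∨ z = conj ξ ∨ z = (conj ξ)⁻¹ ∨ z = ξ⁻¹ := by
  unfold rootOrbit at hz
  split_ifs at hz <;> simp at hz <;> tauto

theorem ne_zero_of_mem_rootOrbit {ξ z : ℂ} (hξ : ξ ≠ 0) (hz : z ∈ rootOrbit ξ) : z ≠ 0 := by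
  rcases mem_rootOrbit hz with rfl | rfl | rfl | rfl <;> simpa using hξ

theorem rootOrbit_nodup {ξ : ℂ} (hξ : ξ ∈ fundamentalDomain) : (rootOrbit ξ).Nodup := by
  unfold rootOrbit
  split_ifs with h1 h2
  · have him := fundamentalDomain.im_pos_of_norm_eq_one hξ h1
    simpa [Complex.ext_iff] using fun h => by linarith
  · have := fundamentalDomain.one_lt_norm_inv hξ h1
    simpa using fun h => by rw [← h] at this; linarith [hξ.1]
  · have him : 0 < ξ.im := hξ.2.2.1.lt_of_ne' h2
    have hn := fundamentalDomain.one_lt_norm_inv hξ h1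
    have hi := fundamentalDomain.im_inv_neg hξ h2
    have hc : ‖(conj ξ)⁻¹‖ = ‖ξ⁻¹‖ := by simp
    have hci : ((conj ξ)⁻¹).im = -(ξ⁻¹).im := by simp [Complex.inv_im, neg_div]
    have hn' : ‖conj ξ‖ = ‖ξ‖ := Complex.norm_conj ξ
    simp only [Multiset.insert_eq_cons, Multiset.nodup_cons, Multiset.mem_cons,
      Multiset.mem_singleton, not_or, Multiset.nodup_singleton, and_true]
    -- the four points are told apart by the sign of `Im` and by `‖·‖ < 1`
    refine ⟨⟨?_, ?_, ?_⟩, ⟨?_, ?_⟩, ?_⟩ <;> intro h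
    all_goals first
      | linarith [congrArg Complex.im h, Complex.conj_im ξ]
      | linarith [congrArg norm h, hξ.1]

theorem eq_of_mem_rootOrbit {ξ z : ℂ} (hξ : ξ ∈ fundamentalDomain) (hz : z ∈ rootOrbit ξ)
    (hzD : z ∈ fundamentalDomain) : z = ξ := by
  have hz_im : 0 ≤ z.im := hzD.2.2.1
  have hz_norm : ‖z‖ ≤ 1 := hzD.1
  unfold rootOrbit at hz
  split_ifs at hz with h1 h2 <;>
    simp only [Multiset.insert_eq_cons, Multiset.mem_cons, Multiset.mem_singleton] at hz
  · have := fundamentalDomain.im_pos_of_norm_eq_one hξ h1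
    rcases hz with rfl | rfl
    · rfl
    · rw [Complex.conj_im] at hz_im
      linarith
  · have := fundamentalDomain.one_lt_norm_inv hξ h1
    rcases hz with rfl | rfl
    · rfl
    · linarith
  · have hn := fundamentalDomain.one_lt_norm_inv hξ h1
    have him : 0 < ξ.im := hξ.2.2.1.lt_of_ne' h2
    rcases hz with rfl | rfl | rfl | rfl
    · rfl
    · rw [Complex.conj_im] at hz_im
      linarith
    · rw [norm_inv, Complex.norm_conj, ← norm_inv] at hz_norm
      linarith
    · linarith

theorem count_rootOrbit {ξ ξ' : ℂ} (hξ : ξ ∈ fundamentalDomain)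
    (hξ' : ξ' ∈ fundamentalDomain) : (rootOrbit ξ').count ξ = if ξ' = ξ then 1 else 0 := by
  split_ifs with h
  · subst h
    exact Multiset.count_eq_one_of_mem (rootOrbit_nodup hξ') (mem_rootOrbit_self ξ')
  · exact Multiset.count_eq_zero.2 fun hmem => h (eq_of_mem_rootOrbit hξ' hmem hξ).symm

theorem rootOrbit_map_conj (ξ : ℂ) : (rootOrbit ξ).map conj = rootOrbit ξ := by
  unfold rootOrbit
  split_ifs with h1 h2
  · simp only [Multiset.insert_eq_cons, Multiset.map_cons, Multiset.map_singleton,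
      Complex.conj_conj]
    simp only [← Multiset.singleton_add]
    abel
  · simp [Complex.conj_eq_iff_im.2 h2]
  · simp only [Multiset.insert_eq_cons, Multiset.map_cons, Multiset.map_singleton,
      Complex.conj_conj, map_inv₀]
    simp only [← Multiset.singleton_add]
    abel

theorem rootOrbit_map_inv (ξ : ℂ) : (rootOrbit ξ).map (·⁻¹) = rootOrbit ξ := by
  unfold rootOrbit
  split_ifs with h1 h2 <;>
    simp only [Multiset.insert_eq_cons, Multiset.map_cons, Multiset.map_singleton, inv_inv]
  · rw [Complex.inv_eq_conj h1, ← map_inv₀, Complex.inv_eq_conj h1, Complex.conj_conj]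
    simp only [← Multiset.singleton_add]
    abel
  all_goals simp only [← Multiset.singleton_add]; abel

noncomputable def bxiShift (ξ : ℂ) : ℕ :=
  if ‖ξ‖ = 1 then 0 else if ξ.im = 0 then 1 else 2

theorem Bxi_eq_toLaurent_mul_T (ξ : ℂ) :
    Bxi ξ = toLaurent ((rootOrbit ξ).map (X - Polynomial.C ·)).prod * T (-bxiShift ξ) := by
  have hX (z : ℂ) : toLaurent (X - Polynomial.C z) = T 1 - C z := by simp
  have hT (z : ℂ) : (T 1 - C z) * T (-1) = 1 - C z * T (-1) := by
    rw [sub_mul, ← T_add, add_neg_cancel, T_zero]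
  unfold Bxi rootOrbit bxiShift
  split_ifs
  · simp [hX]
  · simp only [Multiset.insert_eq_cons, Multiset.map_cons, Multiset.map_singleton,
      Multiset.prod_cons, Multiset.prod_singleton, map_mul, hX, Nat.cast_one, mul_assoc, hT]
  · simp only [Multiset.insert_eq_cons, Multiset.map_cons, Multiset.map_singleton,
      Multiset.prod_cons, Multiset.prod_singleton, map_mul, hX]
    rw [show -((2 : ℕ) : ℤ) = -1 + -1 by norm_num, T_add, mul_comm (T (-1)) (C _),
      mul_comm (T (-1)) (C _), ← hT, ← hT]
    ring

noncomputable def orbitRoots (f : ℂ →₀ ℕ) : Multiset ℂ :=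
  f.sum fun ξ k => k • rootOrbit ξ

theorem orbitRoots_add (f g : ℂ →₀ ℕ) : orbitRoots (f + g) = orbitRoots f + orbitRoots g :=
  Finsupp.sum_add_index' (fun _ => zero_nsmul _) (fun _ => add_nsmul _)

theorem orbitRoots_single (ξ : ℂ) (n : ℕ) :
    orbitRoots (Finsupp.single ξ n) = n • rootOrbit ξ :=
  Finsupp.sum_single_index (zero_nsmul _)

theorem count_orbitRoots {f : ℂ →₀ ℕ} (hf : ↑f.support ⊆ fundamentalDomain) {ξ : ℂ}
    (hξ : ξ ∈ fundamentalDomain) : (orbitRoots f).count ξ = f ξ := by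
  rw [orbitRoots, Finsupp.sum, Multiset.count_sum', ← f.sum_ite_self_eq']
  refine Finset.sum_congr rfl fun ξ' hξ' => ?_
  rw [Multiset.count_nsmul, count_rootOrbit hξ (hf hξ'), mul_ite, mul_one, mul_zero]

theorem eq_of_orbitRoots_eq {f g : ℂ →₀ ℕ} (hf : ↑f.support ⊆ fundamentalDomain)
    (hg : ↑g.support ⊆ fundamentalDomain) (h : orbitRoots f = orbitRoots g) : f = g := by
  ext ξ
  by_cases hξ : ξ ∈ fundamentalDomain
  · rw [← count_orbitRoots hf hξ, ← count_orbitRoots hg hξ, h]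
  · rw [Finsupp.notMem_support_iff.1 (mt (@hf ξ) hξ),
      Finsupp.notMem_support_iff.1 (mt (@hg ξ) hξ)]

theorem zero_notMem_orbitRoots {f : ℂ →₀ ℕ} (hf : ↑f.support ⊆ fundamentalDomain) :
    0 ∉ orbitRoots f := fun h => by
  obtain ⟨ξ, hξ, h⟩ := Multiset.mem_sum.1 h
  exact ne_zero_of_mem_rootOrbit (hf hξ).2.1 (Multiset.mem_of_mem_nsmul h) rfl

noncomputable def totalShift (f : ℂ →₀ ℕ) : ℕ :=
  f.sum fun ξ k => k * bxiShift ξ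

theorem totalShift_add (f g : ℂ →₀ ℕ) : totalShift (f + g) = totalShift f + totalShift g :=
  Finsupp.sum_add_index' (fun _ => zero_mul _) (fun _ b₁ b₂ => add_mul b₁ b₂ _)

theorem totalShift_single (ξ : ℂ) (n : ℕ) :
    totalShift (Finsupp.single ξ n) = n * bxiShift ξ :=
  Finsupp.sum_single_index (zero_mul _)

theorem prod_Bxi_pow_eq (f : ℂ →₀ ℕ) :
    f.prod (fun ξ k => Bxi ξ ^ k) =
      toLaurent ((orbitRoots f).map (X - Polynomial.C ·)).prod * T (-totalShift f) := by
  induction f using Finsupp.induction_linear with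
  | zero => simp [orbitRoots, totalShift]
  | add f g hf hg =>
    rw [Finsupp.prod_add_index' (fun _ => pow_zero _) (fun _ => pow_add _), hf, hg,
      orbitRoots_add, totalShift_add, Multiset.map_add, Multiset.prod_add, map_mul]
    push_cast
    rw [neg_add, T_add]
    ring
  | single ξ n =>
    rw [Finsupp.prod_single_index (h := fun ξ k => Bxi ξ ^ k) (pow_zero _), orbitRoots_single,
      totalShift_single, Bxi_eq_toLaurent_mul_T, mul_pow, ← map_pow, T_pow, Multiset.map_nsmul,
      Multiset.prod_nsmul]
    push_cast
    ring_nf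

theorem C_mul_T_mul_prod_Bxi (r : ℂ) (n : ℤ) (f : ℂ →₀ ℕ) :
    C r * T n * f.prod (fun ξ k => Bxi ξ ^ k) =
      toLaurent (Polynomial.C r * ((orbitRoots f).map (X - Polynomial.C ·)).prod) *
        T (n - totalShift f) := by
  rw [prod_Bxi_pow_eq, map_mul, Polynomial.toLaurent_C, sub_eq_add_neg, T_add]
  ring

theorem mem_fundamentalDomain_or_conj {z : ℂ} (hz : ‖z‖ ≤ 1) (h0 : z ≠ 0) (h1 : z ≠ 1)
    (hm1 : z ≠ -1) : z ∈ fundamentalDomain ∨ conj z ∈ fundamentalDomain := by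
  rcases le_or_gt 0 z.im with him | him
  · exact Or.inl ⟨hz, h0, him, h1, hm1⟩
  · refine Or.inr ⟨by simpa using hz, by simpa using h0, by rw [Complex.conj_im]; linarith,
      fun h => h1 ?_, fun h => hm1 ?_⟩
    · simpa using congrArg conj h
    · simpa using congrArg conj h

theorem exists_mem_fundamentalDomain {P : ℂ → Prop} (hconj : ∀ z, P z → P (conj z))
    (hinv : ∀ z, P z → P z⁻¹) {a : ℂ} (ha : P a) (h0 : a ≠ 0) (h1 : a ≠ 1) (hm1 : a ≠ -1) :
    ∃ ξ ∈ fundamentalDomain, P ξ := by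
  suffices ∀ z, P z → ‖z‖ ≤ 1 → z ≠ 0 → z ≠ 1 → z ≠ -1 → ∃ ξ ∈ fundamentalDomain, P ξ by
    rcases le_or_gt ‖a‖ 1 with ha1 | ha1
    · exact this a ha ha1 h0 h1 hm1
    · refine this a⁻¹ (hinv a ha) ?_ (inv_ne_zero h0) (by simpa using h1) ?_
      · rw [norm_inv]
        exact inv_le_one_of_one_le₀ ha1.le
      · rwa [Ne, inv_eq_iff_eq_inv, inv_neg, inv_one]
  intro z hz hz1 h0 h1 hm1
  rcases mem_fundamentalDomain_or_conj hz1 h0 h1 hm1 with h | h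
  · exact ⟨z, h, hz⟩
  · exact ⟨conj z, h, hconj z hz⟩

theorem exists_orbitRoots_eq {s : Multiset ℂ} (hconj : s.map conj = s)
    (hinv : s.map (·⁻¹) = s) (h0 : 0 ∉ s) (h1 : 1 ∉ s) (hm1 : -1 ∉ s) :
    ∃ f : ℂ →₀ ℕ, ↑f.support ⊆ fundamentalDomain ∧ orbitRoots f = s := by
  induction hN : Multiset.card s using Nat.strong_induction_on generalizing s with
  | _ N ih =>
  rcases Multiset.empty_or_exists_mem s with rfl | ⟨a, ha⟩
  · exact ⟨0, by simp, by simp [orbitRoots]⟩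
  have hconj' : ∀ z ∈ s, conj z ∈ s := fun z hz => hconj ▸ Multiset.mem_map_of_mem _ hz
  have hinv' : ∀ z ∈ s, z⁻¹ ∈ s := fun z hz => hinv ▸ Multiset.mem_map_of_mem _ hz
  obtain ⟨ξ, hξ, hξs⟩ := exists_mem_fundamentalDomain hconj' hinv' ha
    (ne_of_mem_of_not_mem ha h0) (ne_of_mem_of_not_mem ha h1) (ne_of_mem_of_not_mem ha hm1)
  have hle : rootOrbit ξ ≤ s := (Multiset.le_iff_subset (rootOrbit_nodup hξ)).2 fun z hz => by
    rcases mem_rootOrbit hz with rfl | rfl | rfl | rfl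
    exacts [hξs, hconj' _ hξs, hinv' _ (hconj' _ hξs), hinv' _ hξs]
  have hcard : Multiset.card (s - rootOrbit ξ) < N := by
    rw [← hN, Multiset.card_sub hle]
    have := Multiset.card_le_card hle
    have := Multiset.card_pos_iff_exists_mem.2 ⟨ξ, mem_rootOrbit_self ξ⟩
    omega
  have hsub : s - rootOrbit ξ ≤ s := tsub_le_self
  obtain ⟨f, hf, hfs⟩ := ih _ hcard
    (by rw [Multiset.map_tsub_of_injective (starRingEnd ℂ).injective, hconj, rootOrbit_map_conj])
    (by rw [Multiset.map_tsub_of_injective inv_injective, hinv, rootOrbit_map_inv])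
    (fun h => h0 (Multiset.mem_of_le hsub h)) (fun h => h1 (Multiset.mem_of_le hsub h))
    (fun h => hm1 (Multiset.mem_of_le hsub h)) rfl
  refine ⟨f + Finsupp.single ξ 1, fun z hz => ?_, ?_⟩
  · rcases Finset.mem_union.1 (Finsupp.support_add hz) with hz | hz
    · exact hf hz
    · rwa [Finset.mem_singleton.1 (Finsupp.support_single_subset hz)]
  · rw [orbitRoots_add, orbitRoots_single, hfs, one_nsmul, tsub_add_cancel_of_le hle]

theorem exists_orbitRoots_eq_roots {P : Polynomial ℝ} (hP : P.coeff 0 ≠ 0)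
    (hrev : P.reverse = P) (h1 : (P.map (algebraMap ℝ ℂ)).eval 1 ≠ 0)
    (hm1 : (P.map (algebraMap ℝ ℂ)).eval (-1) ≠ 0) :
    ∃ f : ℂ →₀ ℕ, ↑f.support ⊆ fundamentalDomain ∧
      orbitRoots f = (P.map (algebraMap ℝ ℂ)).roots := by
  have hQ0 : (P.map (algebraMap ℝ ℂ)).coeff 0 ≠ 0 := by simpa using hP
  have hQ : P.map (algebraMap ℝ ℂ) ≠ 0 := fun h => hQ0 (by simp [h])
  refine exists_orbitRoots_eq (Polynomial.roots_map_conj_of_real P) ?_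
    (fun h => hQ0 ?_) (fun h => h1 ((Polynomial.mem_roots hQ).1 h))
    (fun h => hm1 ((Polynomial.mem_roots hQ).1 h))
  · rw [← Polynomial.roots_reverse hQ0,
      Polynomial.reverse_map_of_injective (algebraMap ℝ ℂ).injective, hrev]
  · rwa [Polynomial.mem_roots hQ, Polynomial.IsRoot, ← Polynomial.coeff_zero_eq_eval_zero] at h

theorem toLaurent_mul_T_eq_C_mul_T_mul_prod_Bxi_iff {Q : Polynomial ℂ} (hQ : Q.coeff 0 ≠ 0)
    {m n : ℤ} {r : ℂ} (hr : r ≠ 0) {f : ℂ →₀ ℕ} (hf : ↑f.support ⊆ fundamentalDomain) :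
    toLaurent Q * T m = C r * T n * f.prod (fun ξ k => Bxi ξ ^ k) ↔
      r = Q.leadingCoeff ∧ orbitRoots f = Q.roots ∧ n = m + totalShift f := by
  have hQ0 : Q ≠ 0 := fun h => hQ (by simp [h])
  have hcoeff :
      (Polynomial.C r * ((orbitRoots f).map (X - Polynomial.C ·)).prod).coeff 0 ≠ 0 := by
    rw [Polynomial.coeff_zero_eq_eval_zero, Polynomial.eval_mul, Polynomial.eval_C,
      Polynomial.eval_multiset_prod, Multiset.map_map]
    refine mul_ne_zero hr (Multiset.prod_ne_zero fun h => zero_notMem_orbitRoots hf ?_)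
    obtain ⟨z, hz, hz0⟩ := Multiset.mem_map.1 h
    simp only [Function.comp_apply, Polynomial.eval_sub, Polynomial.eval_X, Polynomial.eval_C,
      zero_sub, neg_eq_zero] at hz0
    rwa [hz0] at hz
  rw [C_mul_T_mul_prod_Bxi, toLaurent_mul_T_eq_iff hQ hcoeff,
    Polynomial.eq_C_mul_prod_X_sub_C_iff hQ0, and_assoc]
  refine and_congr_right fun _ => and_congr_right fun _ => ?_
  omega

theorem lmap_toLaurent_mul_T_eq_C_mul_T_mul_prod_Bxi_iff {P : Polynomial ℝ}
    (hP : P.coeff 0 ≠ 0) {m n : ℤ} {r : ℝ} (hr : r ≠ 0) {f : ℂ →₀ ℕ}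
    (hf : ↑f.support ⊆ fundamentalDomain) :
    lmap (toLaurent P * T m) = C (r : ℂ) * T n * f.prod (fun ξ k => Bxi ξ ^ k) ↔
      r = P.leadingCoeff ∧ orbitRoots f = (P.map (algebraMap ℝ ℂ)).roots ∧
        n = m + totalShift f := by
  rw [lmap_toLaurent_mul_T, toLaurent_mul_T_eq_C_mul_T_mul_prod_Bxi_iff (by simpa using hP)
    (Complex.ofReal_ne_zero.2 hr) hf,
    Polynomial.leadingCoeff_map_of_injective (algebraMap ℝ ℂ).injective, Complex.coe_algebraMap,
    Complex.ofReal_inj]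

/-- Every nonzero real palindromic Laurent polynomial, nonvanishing at `t = ±1`,
factors uniquely as a nonzero real constant times a power `±tⁿ` (the constant
carrying the sign) times a product of elementary palindromic polynomials
`B_ξ^{n_ξ}`, with `ξ` ranging over `{ξ ≠ 0 : Im ξ ≥ 0, |ξ| ≤ 1, ξ ≠ ±1}`. -/
theorem palindromic_factorization_unique
    (p : LaurentPolynomial ℝ) (hp : p ≠ 0) (hpal : invert p = p)
    (h1 : lEval p 1 ≠ 0) (hm1 : lEval p (-1) ≠ 0) :
    ∃! x : ℝ × ℤ × (ℂ →₀ ℕ),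
      x.1 ≠ 0 ∧
      (∀ ξ ∈ x.2.2.support,
        ‖ξ‖ ≤ 1 ∧ ξ ≠ 0 ∧ 0 ≤ ξ.im ∧ ξ ≠ 1 ∧ ξ ≠ -1) ∧
      lmap p = C (x.1 : ℂ) * T x.2.1 * x.2.2.prod (fun ξ k => Bxi ξ ^ k) := by
  obtain ⟨P, m, hP0, rfl⟩ := exists_eq_toLaurent_mul_T hp
  have eval_ne_zero {z : ℂ} (hz : z ≠ 0) (h : lEval (toLaurent P * T m) z ≠ 0) :
      (P.map (algebraMap ℝ ℂ)).eval z ≠ 0 :=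
    left_ne_zero_of_mul (by rwa [← lEval_toLaurent_mul_T P m hz])
  obtain ⟨f₀, hf₀, hf₀P⟩ := exists_orbitRoots_eq_roots hP0
    (reverse_eq_self_of_invert_eq hP0 hpal) (eval_ne_zero one_ne_zero h1)
    (eval_ne_zero (by norm_num) hm1)
  have hPlc : P.leadingCoeff ≠ 0 := Polynomial.leadingCoeff_ne_zero.2 fun h => hP0 (by simp [h])
  refine ⟨(P.leadingCoeff, m + totalShift f₀, f₀), ⟨hPlc, hf₀,
    (lmap_toLaurent_mul_T_eq_C_mul_T_mul_prod_Bxi_iff hP0 hPlc hf₀).2 ⟨rfl, hf₀P, rfl⟩⟩, ?_⟩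
  rintro ⟨r, n, f⟩ ⟨hr, hf, h⟩
  dsimp only at hr hf h
  obtain ⟨rfl, hfP, rfl⟩ := (lmap_toLaurent_mul_T_eq_C_mul_T_mul_prod_Bxi_iff hP0 hr hf).1 h
  obtain rfl := eq_of_orbitRoots_eq hf hf₀ (hfP.trans hf₀P.symm)
  rfl
end
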